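/- For integers m ≥ 2 and n ≥ 1, the two-color Ramsey number of a tree T_m on m vertices versus the complete graph K_n equals (m−1)(n−1)+1. -/

import Mathlib

open SimpleGraph

/-- `H` is contained in `G` as a subgraph (there is an injective adjacency-preserving map). -/
def ContainsCopy {α β : Type*} (H : SimpleGraph α) (G : SimpleGraph β) : Prop :=
  ∃ f : α ↪ β, ∀ u v, H.Adj u v → G.Adj (f u) (f v)

/-- The `k`-edge-coloring `c` of the complete graph on `Fin N` contains a monochromatic copy of `H`. -/
def HasMonoCopy {α : Type*} (H : SimpleGraph α) {N k : ℕ}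
    (c : Sym2 (Fin N) → Fin k) : Prop :=
  ∃ i : Fin k, ∃ f : α ↪ Fin N, ∀ u v, H.Adj u v → c s(f u, f v) = i

/-- The multicolor Ramsey number `r_k(H)`: the least `N` such that every `k`-coloring of the
edges of `K_N` contains a monochromatic copy of `H`. -/
noncomputable def multiRamsey {α : Type*} (H : SimpleGraph α) (k : ℕ) : ℕ :=
  sInf {N | ∀ c : Sym2 (Fin N) → Fin k, HasMonoCopy H c}

/-- The graph on `Fin N` formed by the edges of color `i`. -/
def colorGraph {N k : ℕ} (c : Sym2 (Fin N) → Fin k) (i : Fin k) : SimpleGraph (Fin N) where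
  Adj u v := u ≠ v ∧ c s(u, v) = i
  symm := by
    refine ⟨?_⟩
    intro u v h
    exact ⟨h.1.symm, by rw [Sym2.eq_swap]; exact h.2⟩
  loopless := ⟨fun u h => h.1 rfl⟩

/-- The independence number of a graph. -/
noncomputable def indepNum {V : Type*} (G : SimpleGraph V) : ℕ :=
  sSup {n | ∃ s : Finset V, s.card = n ∧ ∀ u ∈ s, ∀ v ∈ s, ¬ G.Adj u v}

/-- The two-color (asymmetric) Ramsey number `r(G, H)`. -/
noncomputable def ramsey2 {α β : Type*} (G : SimpleGraph α) (H : SimpleGraph β) : ℕ :=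
  sInf {N | ∀ c : Sym2 (Fin N) → Bool,
    (∃ f : α ↪ Fin N, ∀ u v, G.Adj u v → c s(f u, f v) = true) ∨
    (∃ f : β ↪ Fin N, ∀ u v, H.Adj u v → c s(f u, f v) = false)}

/-! A tree on `m` vertices embeds into every graph of minimum degree at least `m - 1`: remove a
leaf, embed the rest, and send the leaf to a neighbour of its parent's image that is not yet
used. So a red graph without a copy of `T` has, in every vertex set, a vertex of red degree below
`m - 1`; deleting it with its neighbours and recursing gives a blue clique on at least a
`1 / (m - 1)` fraction of the vertices. Conversely, `n - 1` disjoint red cliques of size `m - 1`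
joined by blue edges contain no red `T` (a connected red subgraph stays inside one clique) and no
blue `K_n` (a blue clique meets each red clique at most once). -/

open Finset

variable {V W : Type*} {T : SimpleGraph V} {G : SimpleGraph W}

lemma exists_adj_mem_notMem_of_card_le [DecidableEq W] [DecidableRel G.Adj] {s t : Finset W}
    {x : W} (hx : x ∈ t) (h : #t ≤ #{u ∈ s | G.Adj x u}) :
    ∃ w ∈ s, G.Adj x w ∧ w ∉ t := by
  have hlt : #(t.erase x) < #{u ∈ s | G.Adj x u} := by
    rw [card_erase_of_mem hx]; have := card_pos.mpr ⟨x, hx⟩; omega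
  obtain ⟨w, hw, hwt⟩ := exists_mem_notMem_of_card_lt_card hlt
  rw [mem_filter] at hw
  exact ⟨w, hw.1, hw.2, fun h => hwt (mem_erase.mpr ⟨hw.2.ne.symm, h⟩)⟩

lemma exists_embedding_extend_leaf [DecidableEq V] {ℓ p : V} (hp : T.Adj ℓ p)
    (hleaf : ∀ v, T.Adj ℓ v → v = p) (f : ({ℓ}ᶜ : Set V) ↪ W)
    (hf : ∀ u v, (T.induce {ℓ}ᶜ).Adj u v → G.Adj (f u) (f v))
    {w : W} (hw : G.Adj (f ⟨p, hp.ne.symm⟩) w) (hwf : w ∉ Set.range f) :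
    ∃ g : V ↪ W, Set.range g ⊆ insert w (Set.range f) ∧
      ∀ u v, T.Adj u v → G.Adj (g u) (g v) := by
  set g : V ↪ W := (Equiv.optionSubtypeNe ℓ).symm.toEmbedding.trans (f.optionElim w hwf)
  have hgℓ : g ℓ = w := by
    change f.optionElim w hwf ((Equiv.optionSubtypeNe ℓ).symm ℓ) = w
    rw [Equiv.optionSubtypeNe_symm_self]; rfl
  have hg : ∀ v (hv : v ≠ ℓ), g v = f ⟨v, hv⟩ := fun v hv => by
    change f.optionElim w hwf ((Equiv.optionSubtypeNe ℓ).symm v) = _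
    rw [Equiv.optionSubtypeNe_symm_of_ne hv]; rfl
  have hleaf_adj : ∀ v, T.Adj ℓ v → G.Adj (g ℓ) (g v) := fun v hv => by
    obtain rfl := hleaf v hv
    rw [hgℓ, hg v hp.ne.symm]; exact hw.symm
  refine ⟨g, ?_, fun u v huv => ?_⟩
  · rintro _ ⟨v, rfl⟩
    by_cases hv : v = ℓ
    · exact .inl (hv ▸ hgℓ)
    · exact .inr ⟨_, (hg v hv).symm⟩
  · by_cases hu : u = ℓ
    · subst hu; exact hleaf_adj v huv
    by_cases hv : v = ℓ
    · subst hv; exact (hleaf_adj u huv.symm).symm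
    rw [hg u hu, hg v hv]
    exact hf _ _ huv

theorem SimpleGraph.IsTree.exists_embedding_of_le_degree [Fintype V] (hT : T.IsTree)
    [DecidableEq W] [DecidableRel G.Adj] {s : Finset W} {d : ℕ} (hs : s.Nonempty)
    (hV : Fintype.card V ≤ d + 1) (hdeg : ∀ x ∈ s, d ≤ #{u ∈ s | G.Adj x u}) :
    ∃ f : V ↪ W, Set.range f ⊆ s ∧ ∀ u v, T.Adj u v → G.Adj (f u) (f v) := by
  refine Fintype.induction_subsingleton_or_nontrivial (P := fun V _ => ∀ T : SimpleGraph V,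
    T.IsTree → Fintype.card V ≤ d + 1 → ∃ f : V ↪ W, Set.range f ⊆ s ∧
      ∀ u v, T.Adj u v → G.Adj (f u) (f v)) V ?_ ?_ T hT hV
  · intro V _ _ T hT hV
    obtain ⟨x, hx⟩ := hs
    refine ⟨⟨fun _ => x, fun u v _ => Subsingleton.elim u v⟩, ?_, fun u v huv => ?_⟩
    · rintro _ ⟨_, rfl⟩; exact hx
    · exact (huv.ne (Subsingleton.elim u v)).elim
  · intro V _ _ ih T hT hV
    classical
    obtain ⟨ℓ, hℓ⟩ := hT.exists_vert_degree_one_of_nontrivial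
    obtain ⟨p, hp, hleaf⟩ := degree_eq_one_iff_existsUnique_adj.mp hℓ
    have hT' : (T.induce {ℓ}ᶜ).IsTree :=
      ⟨hT.connected.induce_compl_singleton_of_degree_eq_one hℓ, hT.isAcyclic.induce _⟩
    have hcard : Fintype.card ({ℓ}ᶜ : Set V) < Fintype.card V :=
      Fintype.card_subtype_lt (x := ℓ) (by simp)
    obtain ⟨f, hfs, hf⟩ := ih _ hcard _ hT' (by omega)
    have hfp : f ⟨p, hp.ne.symm⟩ ∈ s := hfs ⟨_, rfl⟩
    obtain ⟨w, hws, hw, hwf⟩ := exists_adj_mem_notMem_of_card_le (s := s)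
      (mem_map_of_mem f (mem_univ ⟨p, hp.ne.symm⟩))
      (by rw [card_map, card_univ]; exact (by omega : _ ≤ d).trans (hdeg _ hfp))
    obtain ⟨g, hg, hgT⟩ := exists_embedding_extend_leaf hp hleaf f hf hw (by simpa using hwf)
    exact ⟨g, hg.trans (Set.insert_subset hws hfs), hgT⟩

lemma exists_isIndepSet_subset_of_forall_exists_degree_lt [DecidableEq W] [DecidableRel G.Adj]
    {d : ℕ} (h : ∀ s : Finset W, s.Nonempty → ∃ v ∈ s, #{u ∈ s | G.Adj v u} < d)
    (s : Finset W) : ∃ t ⊆ s, G.IsIndepSet t ∧ #s ≤ d * #t := by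
  induction s using Finset.strongInduction with
  | H s ih =>
    obtain rfl | hs := s.eq_empty_or_nonempty
    · exact ⟨∅, empty_subset _, by simp, by simp⟩
    obtain ⟨v, hv, hdeg⟩ := h s hs
    set D := insert v {u ∈ s | G.Adj v u}
    have hvD : v ∈ D := mem_insert_self _ _
    obtain ⟨t, hts, ht, hcard⟩ :=
      ih (s \ D) (sdiff_ssubset (insert_subset hv (filter_subset _ _)) ⟨v, hvD⟩)
    have hts' : ∀ u ∈ t, u ∈ s ∧ u ∉ D := fun u hu => mem_sdiff.mp (hts hu)
    have hvt : v ∉ t := fun h => (hts' v h).2 hvD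
    have hnadj : ∀ u ∈ t, ¬G.Adj v u := fun u hu huv =>
      (hts' u hu).2 (mem_insert_of_mem (mem_filter.mpr ⟨(hts' u hu).1, huv⟩))
    refine ⟨insert v t, insert_subset hv (hts.trans sdiff_subset), ?_, ?_⟩
    · rw [isIndepSet_iff, coe_insert, Set.pairwise_insert]
      exact ⟨ht, fun u hu _ => ⟨hnadj u hu, fun h => hnadj u hu h.symm⟩⟩
    · calc #s ≤ #(s \ D) + #D := card_le_card_sdiff_add_card
        _ ≤ d * #t + d := add_le_add hcard ((card_insert_le _ _).trans hdeg)
        _ = d * #(insert v t) := by rw [card_insert_of_notMem hvt, mul_add_one]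

def Arrows {α β : Type*} (G : SimpleGraph α) (H : SimpleGraph β) (N : ℕ) : Prop :=
  ∀ c : Sym2 (Fin N) → Bool,
    (∃ f : α ↪ Fin N, ∀ u v, G.Adj u v → c s(f u, f v) = true) ∨
    (∃ f : β ↪ Fin N, ∀ u v, H.Adj u v → c s(f u, f v) = false)

lemma ramsey2_eq_sInf_arrows {α β : Type*} (G : SimpleGraph α) (H : SimpleGraph β) :
    ramsey2 G H = sInf {N | Arrows G H N} := rfl

lemma exists_isIndepSet_of_not_containsCopy [Fintype V] [DecidableEq W] [DecidableRel G.Adj]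
    (hT : T.IsTree) (h : ¬ContainsCopy T G) (s : Finset W) :
    ∃ t ⊆ s, G.IsIndepSet t ∧ #s ≤ (Fintype.card V - 1) * #t := by
  refine exists_isIndepSet_subset_of_forall_exists_degree_lt (fun s hs => ?_) s
  by_contra! hdeg
  obtain ⟨f, -, hf⟩ := hT.exists_embedding_of_le_degree hs (by omega) hdeg
  exact h ⟨f, hf⟩

lemma arrows_of_lt [Fintype V] (hT : T.IsTree) {β : Type*} [Fintype β] {N : ℕ}
    (hN : (Fintype.card V - 1) * (Fintype.card β - 1) < N) :
    Arrows T (completeGraph β) N := by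
  classical
  intro c
  let G : SimpleGraph (Fin N) := fromEdgeSet {e | c e = true}
  by_cases hcopy : ContainsCopy T G
  · obtain ⟨f, hf⟩ := hcopy
    exact .inl ⟨f, fun u v huv => ((fromEdgeSet_adj _).mp (hf u v huv)).1⟩
  obtain ⟨t, -, ht, hcard⟩ := exists_isIndepSet_of_not_containsCopy hT hcopy univ
  rw [card_univ, Fintype.card_fin] at hcard
  have hβt : Fintype.card β ≤ #t := by
    have := Nat.lt_of_mul_lt_mul_left (hN.trans_le hcard)
    omega
  obtain ⟨g⟩ := Function.Embedding.nonempty_of_card_le (β := t) (by simpa using hβt)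
  refine .inr ⟨g.trans (Function.Embedding.subtype _), fun u v huv => ?_⟩
  have hne : (g u : Fin N) ≠ g v := fun h => huv (g.injective (Subtype.ext h))
  exact Bool.eq_false_iff.mpr fun hred =>
    ht (g u).2 (g v).2 hne ((fromEdgeSet_adj _).mpr ⟨hred, hne⟩)

lemma SimpleGraph.Preconnected.apply_eq_of_forall_adj {X : Type*} {f : V → X}
    (hT : T.Preconnected) (h : ∀ u v, T.Adj u v → f u = f v) (u v : V) : f u = f v := by
  obtain ⟨p⟩ := hT u v
  induction p with
  | nil => rfl
  | cons huv _ ih => exact (h _ _ huv).trans ih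

lemma not_arrows_of_embedding_prod [Fintype V] {β A B : Type*} [Fintype β] [Fintype A]
    [Fintype B] (hT : T.Connected) (hA : Fintype.card A < Fintype.card V)
    (hB : Fintype.card B < Fintype.card β) {N : ℕ} (e : Fin N ↪ A × B) :
    ¬Arrows T (completeGraph β) N := by
  classical
  let c : Sym2 (Fin N) → Bool :=
    Sym2.lift ⟨fun u v => decide ((e u).2 = (e v).2), fun u v => by simp [eq_comm]⟩
  have hc : ∀ u v, c s(u, v) = decide ((e u).2 = (e v).2) := fun _ _ => rfl
  intro harrows
  rcases harrows c with ⟨f, hf⟩ | ⟨f, hf⟩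
  · have hblock := hT.preconnected.apply_eq_of_forall_adj (f := fun v => (e (f v)).2)
      fun u v huv => by simpa [hc] using hf u v huv
    have hinj : Function.Injective fun v => (e (f v)).1 := fun u v huv =>
      f.injective (e.injective (Prod.ext huv (hblock u v)))
    exact hA.not_ge (Fintype.card_le_of_injective _ hinj)
  · have hinj : Function.Injective fun v => (e (f v)).2 := fun u v huv => by
      by_contra hne
      simpa [hc, huv] using hf u v hne
    exact hB.not_ge (Fintype.card_le_of_injective _ hinj)

lemma not_arrows_of_le [Fintype V] (hT : T.Connected) {β : Type*} [Fintype β] [Nonempty β]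
    {N : ℕ} (hN : N ≤ (Fintype.card V - 1) * (Fintype.card β - 1)) :
    ¬Arrows T (completeGraph β) N := by
  have := hT.nonempty
  refine not_arrows_of_embedding_prod hT (A := Fin (Fintype.card V - 1))
    (B := Fin (Fintype.card β - 1)) ?_ ?_
    ((Fin.castLEEmb hN).trans finProdFinEquiv.symm.toEmbedding)
  · have := Fintype.card_pos (α := V); simp; omega
  · have := Fintype.card_pos (α := β); simp; omega

theorem stmt1_general (m n : ℕ) (hn : 1 ≤ n)
    (T : SimpleGraph (Fin m)) (hT : T.IsTree) :
    ramsey2 T (completeGraph (Fin n)) = (m - 1) * (n - 1) + 1 := by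
  have : Nonempty (Fin n) := ⟨⟨0, hn⟩⟩
  have harrows : Arrows T (completeGraph (Fin n)) ((m - 1) * (n - 1) + 1) :=
    arrows_of_lt hT (by simp)
  rw [ramsey2_eq_sInf_arrows]
  refine le_antisymm (Nat.sInf_le harrows) (le_csInf ⟨_, harrows⟩ fun N hN => ?_)
  by_contra! hlt
  exact not_arrows_of_le hT.connected (by simpa using Nat.le_of_lt_succ hlt) hN

theorem stmt1 (m n : ℕ) (hm : 2 ≤ m) (hn : 1 ≤ n)
    (T : SimpleGraph (Fin m)) (hT : T.IsTree) :
    ramsey2 T (completeGraph (Fin n)) = (m - 1) * (n - 1) + 1 :=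
  stmt1_general m n hn T hT
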